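/- Assume α₁, α₂, α₃ > 0 and α₁+d₂ > 0, α₂+d₁ > 0, α₃+d₃ > 0. Set σ₁ = α₁(α₃+d₃) + α₂(α₁+d₂) + α₃(α₂+d₁), σ₂ = (α₁+d₂)+(α₂+d₁)+(α₃+d₃), λ² = 4(α₂+d₁)(α₁+d₂)(α₃+d₃)/σ₂, and Q* = (√((α₃+d₃)/σ₂), √((α₁+d₂)/σ₂), √((α₂+d₁)/σ₂)). Then the characteristic polynomial of the Jacobian matrix of b at Q* factors as (X + 2σ₁/σ₂)·(X² + λ²); in particular the Jacobian at Q* has one real eigenvalue −2σ₁/σ₂ and a pair of purely imaginary eigenvalues ±iλ with λ = 2√((α₂+d₁)(α₁+d₂)(α₃+d₃)/σ₂). -/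

import Mathlib

open scoped RealInnerProductSpace

/-- The cubic Kolmogorov vector field on `ℝ³` (modelled as `EuclideanSpace ℝ (Fin 3)`):
`b(x)₁ = x₁(α₁ − α₁x₁² − (α₁+α₂+d₁)x₂² + d₂x₃²)`,
`b(x)₂ = x₂(α₂ + d₁x₁² − α₂x₂² − (α₂+α₃+d₃)x₃²)`,
`b(x)₃ = x₃(α₃ − (α₃+α₁+d₂)x₁² + d₃x₂² − α₃x₃²)`. -/
noncomputable def bVF (α₁ α₂ α₃ d₁ d₂ d₃ : ℝ) (x : EuclideanSpace ℝ (Fin 3)) :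
    EuclideanSpace ℝ (Fin 3) :=
  (WithLp.equiv 2 (Fin 3 → ℝ)).symm
    ![x 0 * (α₁ - α₁ * (x 0)^2 - (α₁ + α₂ + d₁) * (x 1)^2 + d₂ * (x 2)^2),
      x 1 * (α₂ + d₁ * (x 0)^2 - α₂ * (x 1)^2 - (α₂ + α₃ + d₃) * (x 2)^2),
      x 2 * (α₃ - (α₃ + α₁ + d₂) * (x 0)^2 + d₃ * (x 1)^2 - α₃ * (x 2)^2)]

/-!
The field `b` is of Kolmogorov type, `bᵢ(x) = xᵢ fᵢ(x)` with `fᵢ(x) = rᵢ + ∑ₖ Aᵢₖ xₖ²`, so its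
Jacobian at `x` is `diag f(x) + 2 D A D` with `D = diag x`. At the interior equilibrium `Q*` all
`fᵢ` vanish, and since `D (2 A D)` and `(2 A D) D` have the same characteristic polynomial, the
square roots in `Q*` disappear: it remains to compute the characteristic polynomial of
`A diag(2 Q*ᵢ²)`, a rational identity in the parameters read off from trace, principal minors
and determinant.
-/

open Polynomial Matrix

section Kolmogorov

variable {ι : Type*} [Fintype ι] (r : ι → ℝ) (A : Matrix ι ι ℝ)

def kolmogorovRate (x : EuclideanSpace ℝ ι) (i : ι) : ℝ := r i + ∑ k, A i k * x k ^ 2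

noncomputable def kolmogorovField (x : EuclideanSpace ℝ ι) : EuclideanSpace ℝ ι :=
  WithLp.toLp 2 fun i => x i * kolmogorovRate r A x i

theorem hasFDerivAt_kolmogorovRate (x : EuclideanSpace ℝ ι) (i : ι) :
    HasFDerivAt (kolmogorovRate r A · i)
      (∑ k, (2 * A i k * x k) • EuclideanSpace.proj (𝕜 := ℝ) k) x := by
  have hcoord (k : ι) : HasFDerivAt (fun y : EuclideanSpace ℝ ι => y k)
      (EuclideanSpace.proj (𝕜 := ℝ) k) x :=
    PiLp.hasFDerivAt_apply 2 x k
  refine ((hasFDerivAt_const (r i) x).add (HasFDerivAt.fun_sum (u := Finset.univ) fun k _ =>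
    ((hcoord k).pow 2).const_mul (A i k))).congr_fderiv ?_
  ext v
  simp only [Nat.add_one_sub_one, pow_one, nsmul_eq_mul, Nat.cast_ofNat, zero_add,
    _root_.sum_apply, _root_.smul_apply, PiLp.proj_apply, smul_eq_mul]
  exact Finset.sum_congr rfl fun k _ => by ring

theorem hasFDerivAt_kolmogorovField_apply (x : EuclideanSpace ℝ ι) (i : ι) :
    HasFDerivAt (kolmogorovField r A · i)
      (kolmogorovRate r A x i • EuclideanSpace.proj (𝕜 := ℝ) i +
        x i • ∑ k, (2 * A i k * x k) • EuclideanSpace.proj (𝕜 := ℝ) k) x := by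
  refine ((PiLp.hasFDerivAt_apply 2 x i).mul
    (hasFDerivAt_kolmogorovRate r A x i)).congr_fderiv ?_
  rw [add_comm]

variable [DecidableEq ι]

theorem jacobian_kolmogorovField (x : EuclideanSpace ℝ ι) :
    Matrix.of (fun i j => fderiv ℝ (kolmogorovField r A) x (EuclideanSpace.single j 1) i) =
      diagonal (kolmogorovRate r A x) + (2 : ℝ) • (diagonal (x ·) * A * diagonal (x ·)) := by
  have hdiff : DifferentiableAt ℝ (kolmogorovField r A) x :=
    differentiableAt_euclidean.2 fun i =>
      (hasFDerivAt_kolmogorovField_apply r A x i).differentiableAt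
  ext i j
  have hcomp := (PiLp.hasFDerivAt_apply (𝕜 := ℝ) 2 (kolmogorovField r A x) i).comp x
    hdiff.hasFDerivAt
  have hentry := DFunLike.congr_fun (hcomp.unique (hasFDerivAt_kolmogorovField_apply r A x i))
    (EuclideanSpace.single j 1)
  simp only [ContinuousLinearMap.comp_apply, PiLp.proj_apply, _root_.add_apply, _root_.smul_apply,
    PiLp.single_apply, smul_eq_mul, mul_ite, mul_one, mul_zero, _root_.sum_apply, Finset.sum_ite_eq',
    Finset.mem_univ, ↓reduceIte] at hentry
  simp only [of_apply, hentry, Matrix.add_apply, diagonal_apply, Matrix.smul_apply, mul_diagonal,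
    diagonal_mul, smul_eq_mul, add_right_inj]
  ring

theorem charpoly_jacobian_kolmogorovField_of_rate_eq_zero (x : EuclideanSpace ℝ ι)
    (hx : kolmogorovRate r A x = 0) :
    (Matrix.of fun i j =>
        fderiv ℝ (kolmogorovField r A) x (EuclideanSpace.single j 1) i).charpoly =
      (A * diagonal fun i => 2 * x i ^ 2).charpoly := by
  rw [jacobian_kolmogorovField, hx, diagonal_zero', zero_add, Matrix.mul_assoc, ← mul_smul_comm,
    charpoly_mul_comm]
  congr 1
  ext i j
  simp only [mul_diagonal, Matrix.smul_apply, smul_eq_mul]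
  ring

end Kolmogorov

theorem Matrix.charpoly_fin_three {R : Type*} [CommRing R] (M : Matrix (Fin 3) (Fin 3) R) :
    M.charpoly = X ^ 3 - C M.trace * X ^ 2 +
      C (M 0 0 * M 1 1 - M 0 1 * M 1 0 + M 0 0 * M 2 2 - M 0 2 * M 2 0 +
        M 1 1 * M 2 2 - M 1 2 * M 2 1) * X - C M.det := by
  simp only [charpoly, det_fin_three, trace_fin_three, charmatrix_apply_eq, ne_eq, Fin.reduceEq,
    not_false_eq_true, charmatrix_apply_ne, map_add, map_sub, map_mul, Fin.isValue]
  ring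

theorem Matrix.charpoly_eq_mul_of_fin_three {R : Type*} [CommRing R]
    (M : Matrix (Fin 3) (Fin 3) R) (k m : R) (htrace : M.trace = -k)
    (hminors : M 0 0 * M 1 1 - M 0 1 * M 1 0 + M 0 0 * M 2 2 - M 0 2 * M 2 0 +
      M 1 1 * M 2 2 - M 1 2 * M 2 1 = m)
    (hdet : M.det = -(k * m)) :
    M.charpoly = (X + C k) * (X ^ 2 + C m) := by
  rw [charpoly_fin_three, htrace, hminors, hdet]
  simp only [map_neg, map_mul]
  ring

section bVF

variable (α₁ α₂ α₃ d₁ d₂ d₃ : ℝ)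

def bVFInteraction : Matrix (Fin 3) (Fin 3) ℝ :=
  !![-α₁, -(α₁ + α₂ + d₁), d₂;
     d₁, -α₂, -(α₂ + α₃ + d₃);
     -(α₃ + α₁ + d₂), d₃, -α₃]

/-- `Q*ᵢ = √(wᵢ / σ₂)` for these weights `w`. -/
def bVFWeight : Fin 3 → ℝ := ![α₃ + d₃, α₁ + d₂, α₂ + d₁]

theorem bVF_eq_kolmogorovField :
    bVF α₁ α₂ α₃ d₁ d₂ d₃ = kolmogorovField ![α₁, α₂, α₃] (bVFInteraction α₁ α₂ α₃ d₁ d₂ d₃) := by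
  funext x
  ext i
  fin_cases i <;>
    simp only [bVF, kolmogorovField, kolmogorovRate, bVFInteraction, WithLp.equiv_symm_apply,
      Fin.sum_univ_three, of_apply, cons_val', cons_val_fin_one, cons_val_zero, cons_val_one,
      cons_val, Fin.zero_eta, Fin.mk_one, Fin.reduceFinMk, Fin.isValue] <;>
    ring

theorem kolmogorovRate_bVFInteraction_eq_zero {S : ℝ}
    (hS : S = (α₁ + d₂) + (α₂ + d₁) + (α₃ + d₃)) (hS0 : S ≠ 0) (x : EuclideanSpace ℝ (Fin 3))
    (hx : ∀ i, x i ^ 2 = bVFWeight α₁ α₂ α₃ d₁ d₂ d₃ i / S) :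
    kolmogorovRate ![α₁, α₂, α₃] (bVFInteraction α₁ α₂ α₃ d₁ d₂ d₃) x = 0 := by
  funext i
  fin_cases i <;>
    simp only [kolmogorovRate, bVFInteraction, bVFWeight, hx, Fin.sum_univ_three, of_apply,
      cons_val', cons_val_fin_one, cons_val_zero, cons_val_one, cons_val, Pi.zero_apply,
      Fin.zero_eta, Fin.mk_one, Fin.reduceFinMk, Fin.isValue] <;>
    field_simp <;> subst hS <;> ring

theorem charpoly_bVFInteraction_mul_diagonal {S : ℝ}
    (hS : S = (α₁ + d₂) + (α₂ + d₁) + (α₃ + d₃)) (hS0 : S ≠ 0) :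
    (bVFInteraction α₁ α₂ α₃ d₁ d₂ d₃ *
        diagonal fun i => 2 * (bVFWeight α₁ α₂ α₃ d₁ d₂ d₃ i / S)).charpoly =
      (X + C (2 * (α₁ * (α₃ + d₃) + α₂ * (α₁ + d₂) + α₃ * (α₂ + d₁)) / S)) *
        (X ^ 2 + C (4 * (α₂ + d₁) * (α₁ + d₂) * (α₃ + d₃) / S)) := by
  subst hS
  apply charpoly_eq_mul_of_fin_three <;>
    simp only [trace_fin_three, det_fin_three, mul_diagonal, bVFInteraction, bVFWeight,
      of_apply, cons_val', cons_val_fin_one, cons_val_zero, cons_val_one, cons_val,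
      Fin.isValue] <;>
    field_simp <;> ring

end bVF

theorem charpoly_jacobian_at_Qstar_general (α₁ α₂ α₃ d₁ d₂ d₃ σ₁ σ₂ : ℝ)
    (h1 : 0 < α₁ + d₂) (h2 : 0 < α₂ + d₁) (h3 : 0 < α₃ + d₃)
    (hσ₁ : σ₁ = α₁ * (α₃ + d₃) + α₂ * (α₁ + d₂) + α₃ * (α₂ + d₁))
    (hσ₂ : σ₂ = (α₁ + d₂) + (α₂ + d₁) + (α₃ + d₃))
    (Q : EuclideanSpace ℝ (Fin 3))
    (hQ : Q = (WithLp.equiv 2 (Fin 3 → ℝ)).symm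
      ![Real.sqrt ((α₃ + d₃) / σ₂), Real.sqrt ((α₁ + d₂) / σ₂),
        Real.sqrt ((α₂ + d₁) / σ₂)]) :
    (Matrix.of fun i j : Fin 3 =>
        fderiv ℝ (bVF α₁ α₂ α₃ d₁ d₂ d₃) Q (EuclideanSpace.single j 1) i).charpoly
      = (Polynomial.X + Polynomial.C (2 * σ₁ / σ₂)) *
        (Polynomial.X ^ 2 +
          Polynomial.C (4 * (α₂ + d₁) * (α₁ + d₂) * (α₃ + d₃) / σ₂)) := by
  have hσ₂_pos : 0 < σ₂ := by linarith
  have hQ_sq (i : Fin 3) : Q i ^ 2 = bVFWeight α₁ α₂ α₃ d₁ d₂ d₃ i / σ₂ := by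
    subst hQ
    fin_cases i <;>
      simp only [WithLp.equiv_symm_apply, bVFWeight, cons_val_zero, cons_val_one, cons_val,
        Fin.zero_eta, Fin.mk_one, Fin.reduceFinMk, Fin.isValue] <;>
      exact Real.sq_sqrt (by positivity)
  rw [bVF_eq_kolmogorovField, charpoly_jacobian_kolmogorovField_of_rate_eq_zero _ _ _
    (kolmogorovRate_bVFInteraction_eq_zero _ _ _ _ _ _ hσ₂ hσ₂_pos.ne' Q hQ_sq)]
  simp only [hQ_sq]
  rw [hσ₁]
  exact charpoly_bVFInteraction_mul_diagonal _ _ _ _ _ _ hσ₂ hσ₂_pos.ne'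

/-- At the interior equilibrium `Q*`, the characteristic polynomial of the Jacobian
matrix of `b` factors as `(X + 2σ₁/σ₂)(X² + λ²)` with
`λ² = 4(α₂+d₁)(α₁+d₂)(α₃+d₃)/σ₂`; hence the eigenvalues are `−2σ₁/σ₂` and `±iλ`. -/
theorem charpoly_jacobian_at_Qstar (α₁ α₂ α₃ d₁ d₂ d₃ σ₁ σ₂ : ℝ)
    (hα₁ : 0 < α₁) (hα₂ : 0 < α₂) (hα₃ : 0 < α₃)
    (h1 : 0 < α₁ + d₂) (h2 : 0 < α₂ + d₁) (h3 : 0 < α₃ + d₃)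
    (hσ₁ : σ₁ = α₁ * (α₃ + d₃) + α₂ * (α₁ + d₂) + α₃ * (α₂ + d₁))
    (hσ₂ : σ₂ = (α₁ + d₂) + (α₂ + d₁) + (α₃ + d₃))
    (Q : EuclideanSpace ℝ (Fin 3))
    (hQ : Q = (WithLp.equiv 2 (Fin 3 → ℝ)).symm
      ![Real.sqrt ((α₃ + d₃) / σ₂), Real.sqrt ((α₁ + d₂) / σ₂),
        Real.sqrt ((α₂ + d₁) / σ₂)]) :
    (Matrix.of fun i j : Fin 3 =>
        fderiv ℝ (bVF α₁ α₂ α₃ d₁ d₂ d₃) Q (EuclideanSpace.single j 1) i).charpoly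
      = (Polynomial.X + Polynomial.C (2 * σ₁ / σ₂)) *
        (Polynomial.X ^ 2 +
          Polynomial.C (4 * (α₂ + d₁) * (α₁ + d₂) * (α₃ + d₃) / σ₂)) :=
  charpoly_jacobian_at_Qstar_general α₁ α₂ α₃ d₁ d₂ d₃ σ₁ σ₂ h1 h2 h3 hσ₁ hσ₂ Q hQ
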